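/- Fix c > 0. If H is an r-uniform hypergraph on n vertices with minimum positive co-degree at least c*n, then for all sufficiently large n, H has at least (1/2)*(c^r/r!)*n^r edges. -/

import Mathlib

/-!
Write `δ = c n` and `d(S)` for the number of edges containing `S`. By induction on `k`, every
set `S` of size `r - k` lying in an edge has `d(S) ≥ δ^k / k!`. For the step, extend `S` inside an
edge to an `(r-1)`-set `T`: the `≥ δ` edges through `T` supply `≥ δ` vertices `v ∉ S` with
`S ∪ {v}` in an edge, each with `d(S ∪ {v}) ≥ δ^k / k!`, while every edge through `S` contains
at most `k + 1` such `v`; so `(k + 1) d(S) ≥ δ · δ^k / k!`. The case `S = ∅` gives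
`|H| ≥ (c n)^r / r!` for every `n`.
-/

open Finset Nat

namespace Finset

variable {α : Type*} [DecidableEq α]

theorem sum_card_filter_insert_subset_le {H : Finset (Finset α)} {S V : Finset α} {m : ℕ}
    (hV : Disjoint V S) (hm : ∀ e ∈ H, S ⊆ e → #(e \ S) ≤ m) :
    ∑ v ∈ V, #{e ∈ H | insert v S ⊆ e} ≤ m * #{e ∈ H | S ⊆ e} := by
  have hlink : ∀ v, {e ∈ H | insert v S ⊆ e} = {e ∈ H | S ⊆ e}.bipartiteAbove (· ∈ ·) v := by
    intro v
    ext e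
    simp only [mem_bipartiteAbove, mem_filter, insert_subset_iff]; tauto
  calc ∑ v ∈ V, #{e ∈ H | insert v S ⊆ e}
      = ∑ e ∈ {e ∈ H | S ⊆ e}, #(V.bipartiteBelow (· ∈ ·) e) := by
        simp only [hlink]; exact sum_card_bipartiteAbove_eq_sum_card_bipartiteBelow _
    _ ≤ ∑ e ∈ {e ∈ H | S ⊆ e}, m := by
        refine sum_le_sum fun e he => ?_
        obtain ⟨heH, hSe⟩ := mem_filter.mp he
        refine (card_le_card fun v hv => ?_).trans (hm e heH hSe)
        obtain ⟨hvV, hve⟩ := (mem_bipartiteBelow _).mp hv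
        exact mem_sdiff.mpr ⟨hve, disjoint_left.mp hV hvV⟩
    _ = m * #{e ∈ H | S ⊆ e} := by rw [sum_const, smul_eq_mul, mul_comm]

theorem card_le_card_biUnion_sdiff {F : Finset (Finset α)} {T : Finset α}
    (hF : ∀ f ∈ F, T ⊆ f ∧ #f = #T + 1) : #F ≤ #(F.biUnion id \ T) := by
  calc #F ≤ #((F.biUnion id \ T).image (insert · T)) := by
        refine card_le_card fun f hf => ?_
        obtain ⟨hTf, hcard⟩ := hF f hf
        obtain ⟨v, hv⟩ : ∃ v, f \ T = {v} := card_eq_one.mp (by grind [card_sdiff_of_subset])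
        have hvf : v ∈ f \ T := by simp [hv]
        refine mem_image.mpr ⟨v, ?_, ?_⟩
        · exact mem_sdiff.mpr ⟨mem_biUnion.mpr ⟨f, hf, (mem_sdiff.mp hvf).1⟩, (mem_sdiff.mp hvf).2⟩
        · rw [← union_sdiff_of_subset hTf, hv, insert_eq, union_comm]
    _ ≤ #(F.biUnion id \ T) := card_image_le

end Finset

section Hypergraph

variable {α : Type*} [DecidableEq α] {H : Finset (Finset α)} {r : ℕ} {δ : ℝ}

theorem pow_div_factorial_le_card_filter_superset (hδ : 0 ≤ δ) (hH : ∀ e ∈ H, #e = r)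
    (hco : ∀ S : Finset α, #S = r - 1 → (∃ e ∈ H, S ⊆ e) → δ ≤ #{e ∈ H | S ⊆ e})
    {k : ℕ} (hk : k ≤ r) {S : Finset α} (hS : #S = r - k) (hSH : ∃ e ∈ H, S ⊆ e) :
    δ ^ k / k ! ≤ #{e ∈ H | S ⊆ e} := by
  induction k generalizing S with
  | zero =>
    obtain ⟨e, he, hSe⟩ := hSH
    have : 0 < #{e ∈ H | S ⊆ e} := card_pos.mpr ⟨e, mem_filter.mpr ⟨he, hSe⟩⟩
    simpa using (Nat.one_le_cast (α := ℝ)).mpr this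
  | succ k ih =>
    obtain ⟨e₀, he₀, hSe₀⟩ := hSH
    obtain ⟨T, hST, hTe₀, hT⟩ := exists_subsuperset_card_eq hSe₀ (n := r - 1)
      (by omega) (by rw [hH e₀ he₀]; omega)
    set F := {f ∈ H | T ⊆ f}
    set V := F.biUnion id \ T
    have hδF : δ ≤ #F := hco T hT ⟨e₀, he₀, hTe₀⟩
    have hFV : #F ≤ #V := card_le_card_biUnion_sdiff fun f hf => by
      obtain ⟨hfH, hTf⟩ := mem_filter.mp hf
      exact ⟨hTf, by rw [hH f hfH, hT]; omega⟩
    have hVS : Disjoint V S := disjoint_left.mpr fun v hv hvS => (mem_sdiff.mp hv).2 (hST hvS)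
    have hlink : ∀ v ∈ V, δ ^ k / k ! ≤ #{e ∈ H | insert v S ⊆ e} := by
      intro v hv
      obtain ⟨f, hf, hvf⟩ := mem_biUnion.mp (mem_sdiff.mp hv).1
      obtain ⟨hfH, hTf⟩ := mem_filter.mp hf
      refine ih (by omega) ?_ ⟨f, hfH, insert_subset hvf (hST.trans hTf)⟩
      rw [card_insert_of_notMem (disjoint_left.mp hVS hv), hS]
      omega
    have hcount : ∑ v ∈ V, (#{e ∈ H | insert v S ⊆ e} : ℝ) ≤ (k + 1) * #{e ∈ H | S ⊆ e} := by
      exact_mod_cast sum_card_filter_insert_subset_le hVS fun e he hSe => by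
        rw [card_sdiff_of_subset hSe, hH e he, hS]; omega
    have hpos : (0 : ℝ) < k + 1 := by positivity
    calc δ ^ (k + 1) / (k + 1)! = δ * (δ ^ k / k !) / (k + 1) := by
          push_cast [factorial_succ]; field_simp; ring
      _ ≤ #V * (δ ^ k / k !) / (k + 1) := by gcongr; exact hδF.trans (by exact_mod_cast hFV)
      _ ≤ (∑ v ∈ V, (#{e ∈ H | insert v S ⊆ e} : ℝ)) / (k + 1) := by
          gcongr; simpa using card_nsmul_le_sum V _ _ hlink
      _ ≤ #{e ∈ H | S ⊆ e} := by rwa [div_le_iff₀' hpos]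

end Hypergraph

theorem stmt_5 (r : ℕ) (c : ℝ) (hc : 0 < c) :
    ∃ N : ℕ, ∀ n : ℕ, N ≤ n → ∀ H : Finset (Finset (Fin n)),
      (∀ e ∈ H, e.card = r) → H.Nonempty →
      (∀ S : Finset (Fin n), S.card = r - 1 → (∃ e ∈ H, S ⊆ e) →
        c * n ≤ ((H.filter (fun e => S ⊆ e)).card : ℝ)) →
      (1 / 2) * (c ^ r / (r.factorial : ℝ)) * (n : ℝ) ^ r ≤ (H.card : ℝ) := by
  refine ⟨0, fun n _ H hH ⟨e, he⟩ hco => ?_⟩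
  have hbound := pow_div_factorial_le_card_filter_superset (by positivity) hH hco le_rfl
    (S := ∅) (by simp) ⟨e, he, empty_subset e⟩
  simp only [empty_subset, filter_true, mul_pow] at hbound
  have : 0 ≤ c ^ r / r ! * (n : ℝ) ^ r := by positivity
  calc 1 / 2 * (c ^ r / r !) * (n : ℝ) ^ r ≤ c ^ r * n ^ r / r ! := by
        rw [mul_div_right_comm]; linarith
    _ ≤ #H := hbound
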